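/- Let (x, λ) be an approximate KKT point for projection onto a polyhedron: λ ≥ 0, Gx ≤ h, λ_i(Gx − h)_i = 0, and ‖(x − a) + Gᵀλ‖ ≤ ε. Then ‖x − proj(a)‖ ≤ ε, where proj(a) is the exact Euclidean projection of a onto {y | Gy ≤ h}. -/

import Mathlib

/-!
Write `u = Gᵀλ` and `r = (x - a) + u` for the residual. Expanding
`‖x - p‖² = ⟪r, x - p⟫ - ⟪u, x - p⟫ + ⟪a - p, x - p⟫`, the last term is `≤ 0` because the
projection `p` satisfies the variational inequality on the convex set `S`, and
`⟪u, x - p⟫ = λ ⬝ᵥ (Gx - Gp) = λ ⬝ᵥ (h - Gp) ≥ 0` by complementary slackness and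
feasibility of `p`. Hence `‖x - p‖² ≤ ‖r‖ ‖x - p‖`, i.e. `‖x - p‖ ≤ ‖r‖ ≤ ε`.
-/

open Matrix

section InnerProductSpace

variable {F : Type*} [NormedAddCommGroup F] [InnerProductSpace ℝ F]

theorem Convex.real_inner_sub_le_zero_of_forall_norm_sub_le {K : Set F} (hK : Convex ℝ K)
    {a p : F} (hp : p ∈ K) (hmin : ∀ w ∈ K, ‖a - p‖ ≤ ‖a - w‖) :
    ∀ w ∈ K, inner ℝ (a - p) (w - p) ≤ 0 := by
  have : Nonempty K := ⟨⟨p, hp⟩⟩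
  refine (norm_eq_iInf_iff_real_inner_le_zero hK hp).mp (le_antisymm ?_ ?_)
  · exact le_ciInf fun w ↦ hmin w w.2
  · have hbdd : BddBelow (Set.range fun w : K ↦ ‖a - w‖) :=
      ⟨0, by rintro _ ⟨w, rfl⟩; exact norm_nonneg _⟩
    exact ciInf_le hbdd ⟨p, hp⟩

theorem norm_sub_le_norm_sub_add_of_real_inner {a p x u : F}
    (hp : inner ℝ (a - p) (x - p) ≤ 0) (hu : 0 ≤ inner ℝ u (x - p)) :
    ‖x - p‖ ≤ ‖x - a + u‖ := by
  have hsq : ‖x - p‖ ^ 2 ≤ ‖x - a + u‖ * ‖x - p‖ :=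
    calc ‖x - p‖ ^ 2 = inner ℝ (x - p) (x - p) := (real_inner_self_eq_norm_sq _).symm
      _ = inner ℝ (x - a + u) (x - p) - inner ℝ u (x - p) + inner ℝ (a - p) (x - p) := by
        rw [← inner_sub_left, ← inner_add_left]; congr 1; abel
      _ ≤ inner ℝ (x - a + u) (x - p) := by linarith
      _ ≤ ‖x - a + u‖ * ‖x - p‖ := real_inner_le_norm _ _
  rcases (norm_nonneg (x - p)).eq_or_lt with h0 | hpos
  · exact h0 ▸ norm_nonneg _
  · exact le_of_mul_le_mul_right (by rwa [← sq]) hpos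

end InnerProductSpace

section Polyhedron

variable {ι κ : Type*} [Fintype ι]

theorem convex_setOf_mulVec_le (G : Matrix κ ι ℝ) (h : κ → ℝ) :
    Convex ℝ {y : EuclideanSpace ℝ ι | ∀ i, (G *ᵥ y) i ≤ h i} :=
  (convex_Iic h).linear_preimage
    (G.mulVecLin.comp (WithLp.linearEquiv 2 ℝ (ι → ℝ)).toLinearMap)

theorem EuclideanSpace.inner_toLp_transpose_mulVec [Fintype κ] (G : Matrix κ ι ℝ)
    (lam : κ → ℝ) (z : EuclideanSpace ℝ ι) :
    inner ℝ ((WithLp.equiv 2 (ι → ℝ)).symm (Gᵀ *ᵥ lam)) z = lam ⬝ᵥ (G *ᵥ z) := by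
  rw [EuclideanSpace.inner_eq_star_dotProduct]
  simp [dotProduct_mulVec, vecMul_transpose, dotProduct_comm]

theorem dotProduct_sub_nonneg_of_complementary_slackness [Fintype κ] {lam u v h : κ → ℝ}
    (hlam : ∀ i, 0 ≤ lam i) (hcs : ∀ i, lam i * (u i - h i) = 0) (hv : ∀ i, v i ≤ h i) :
    0 ≤ lam ⬝ᵥ (u - v) := by
  refine Finset.sum_nonneg fun i _ ↦ ?_
  have hsplit : lam i * (u - v) i = lam i * (u i - h i) + lam i * (h i - v i) := by
    simp only [Pi.sub_apply]; ring
  rw [hsplit, hcs i, zero_add]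
  exact mul_nonneg (hlam i) (sub_nonneg.mpr (hv i))

end Polyhedron

theorem approx_kkt_error_bound_general {n m : ℕ}
    (a : EuclideanSpace ℝ (Fin n)) (G : Matrix (Fin m) (Fin n) ℝ) (h : Fin m → ℝ)
    (S : Set (EuclideanSpace ℝ (Fin n)))
    (hS : S = {y : EuclideanSpace ℝ (Fin n) | ∀ i, G.mulVec y i ≤ h i})
    (p : EuclideanSpace ℝ (Fin n)) (hp : p ∈ S ∧ ∀ y ∈ S, ‖a - p‖ ≤ ‖a - y‖)
    (x : EuclideanSpace ℝ (Fin n)) (lam : Fin m → ℝ) (ε : ℝ)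
    (hdual : ∀ i, 0 ≤ lam i)
    (hprim : ∀ i, G.mulVec x i ≤ h i)
    (hcs : ∀ i, lam i * (G.mulVec x i - h i) = 0)
    (hres : ‖(x - a) + (WithLp.equiv 2 (Fin n → ℝ)).symm ((Gᵀ).mulVec lam)‖ ≤ ε) :
    ‖x - p‖ ≤ ε := by
  subst hS
  obtain ⟨hpS, hpmin⟩ := hp
  have hvar : inner ℝ (a - p) (x - p) ≤ 0 :=
    (convex_setOf_mulVec_le G h).real_inner_sub_le_zero_of_forall_norm_sub_le hpS hpmin x hprim
  have hmult : 0 ≤ inner ℝ ((WithLp.equiv 2 (Fin n → ℝ)).symm (Gᵀ *ᵥ lam)) (x - p) := by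
    rw [EuclideanSpace.inner_toLp_transpose_mulVec, WithLp.ofLp_sub, mulVec_sub]
    exact dotProduct_sub_nonneg_of_complementary_slackness hdual hcs hpS
  exact (norm_sub_le_norm_sub_add_of_real_inner hvar hmult).trans hres

/-- An ε-approximate KKT point (feasible, complementary, with stationarity residual ≤ ε)
is within ε of the exact Euclidean projection. -/
theorem approx_kkt_error_bound {n m : ℕ}
    (a : EuclideanSpace ℝ (Fin n)) (G : Matrix (Fin m) (Fin n) ℝ) (h : Fin m → ℝ)
    (S : Set (EuclideanSpace ℝ (Fin n)))
    (hS : S = {y : EuclideanSpace ℝ (Fin n) | ∀ i, G.mulVec y i ≤ h i}) (hne : S.Nonempty)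
    (p : EuclideanSpace ℝ (Fin n)) (hp : p ∈ S ∧ ∀ y ∈ S, ‖a - p‖ ≤ ‖a - y‖)
    (x : EuclideanSpace ℝ (Fin n)) (lam : Fin m → ℝ) (ε : ℝ) (hε : 0 ≤ ε)
    (hdual : ∀ i, 0 ≤ lam i)
    (hprim : ∀ i, G.mulVec x i ≤ h i)
    (hcs : ∀ i, lam i * (G.mulVec x i - h i) = 0)
    (hres : ‖(x - a) + (WithLp.equiv 2 (Fin n → ℝ)).symm ((Gᵀ).mulVec lam)‖ ≤ ε) :
    ‖x - p‖ ≤ ε :=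
  approx_kkt_error_bound_general a G h S hS p hp x lam ε hdual hprim hcs hres
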